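/- For any d×d density matrix ρ (d ≥ 2), the trace-norm mixedness M_tr(ρ) = 1 − (d/(2(d−1))) ‖ρ − (1/d)I_d‖_tr satisfies 0 ≤ M_tr(ρ) ≤ 1, and M_tr(ρ) = 0 whenever ρ is a pure state. -/

import Mathlib

/-!
The trace norm of the Hermitian matrix `ρ - c • 1` is `∑ᵢ |λᵢ - c|` over the eigenvalues `λᵢ` of
`ρ`, since `√((ρ - c)²) = |ρ - c|` in the functional calculus of `ρ`. For a density matrix the
`λᵢ` are nonnegative and sum to `1`, and writing `|x - c| = x + c - 2 min x c` bounds this sum by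
`1 + (d - 2) c` as soon as some `λⱼ` is at least `c`. For `c = 1/d` such a `λⱼ` exists, and the
bound `1 + (d - 2)/d = 2(d - 1)/d` is exactly what the scaling in `M_tr` normalises to `1`.
A pure state has eigenvalues in `{0, 1}`, which attains the bound.
-/

open Matrix
open scoped ComplexOrder

/-- The trace norm of a matrix `A`: `‖A‖_tr = Tr √(AᴴA)`. -/
noncomputable def traceNorm {d : ℕ} (A : Matrix (Fin d) (Fin d) ℂ) : ℝ :=
  (((Matrix.posSemidef_conjTranspose_mul_self A).1.eigenvectorUnitary.1 *
      diagonal (fun i => ((√((Matrix.posSemidef_conjTranspose_mul_self A).1.eigenvalues i) : ℝ) : ℂ)) *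
      (star (Matrix.posSemidef_conjTranspose_mul_self A).1.eigenvectorUnitary :
        Matrix (Fin d) (Fin d) ℂ)).trace).re

namespace Matrix.IsHermitian

variable {n 𝕜 : Type*} [Fintype n] [DecidableEq n] [RCLike 𝕜] {A : Matrix n n 𝕜}

lemma trace_cfc (hA : A.IsHermitian) (f : ℝ → ℝ) :
    (cfc f A).trace = ∑ i, (f (hA.eigenvalues i) : 𝕜) := by
  rw [hA.cfc_eq, IsHermitian.cfc, Unitary.conjStarAlgAut_apply, trace_mul_cycle,
    Unitary.coe_star_mul_self, one_mul, trace_diagonal]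
  rfl

lemma eigenvalues_eq_zero_or_one (hA : A.IsHermitian) (hA₂ : IsIdempotentElem A) (i : n) :
    hA.eigenvalues i = 0 ∨ hA.eigenvalues i = 1 :=
  hA₂.spectrum_subset ℝ (hA.eigenvalues_mem_spectrum_real i)

end Matrix.IsHermitian

section SumAbsSub

open Finset

variable {ι : Type*} [Fintype ι] {p : ι → ℝ} {c : ℝ}

lemma exists_inv_card_le_of_sum_eq_one [Nonempty ι] (hsum : ∑ i, p i = 1) :
    ∃ j, (Fintype.card ι : ℝ)⁻¹ ≤ p j := by
  obtain ⟨j, -, hj⟩ := exists_le_of_sum_le (f := fun _ => (Fintype.card ι : ℝ)⁻¹) univ_nonempty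
    (by rw [hsum, sum_const, card_univ, nsmul_eq_mul, mul_inv_cancel₀ (by positivity)])
  exact ⟨j, hj⟩

lemma sum_abs_sub_const_le (hp : ∀ i, 0 ≤ p i) (hsum : ∑ i, p i = 1) (hc : 0 ≤ c)
    {j : ι} (hj : c ≤ p j) : ∑ i, |p i - c| ≤ 1 + (Fintype.card ι - 2) * c := by
  have habs (i : ι) : |p i - c| = p i + c - 2 * min (p i) c := by
    rw [← max_sub_min_eq_abs', ← min_add_max (p i) c]
    ring
  have hmin : c ≤ ∑ i, min (p i) c := by
    simpa [min_eq_right hj] using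
      single_le_sum (f := fun i => min (p i) c) (fun i _ => le_min (hp i) hc) (mem_univ j)
  simp only [habs, sum_sub_distrib, sum_add_distrib, hsum, ← mul_sum, sum_const, card_univ,
    nsmul_eq_mul]
  linarith

lemma sum_abs_sub_const_of_eq_zero_or_one (hp : ∀ i, p i = 0 ∨ p i = 1)
    (hsum : ∑ i, p i = 1) (hc₀ : 0 ≤ c) (hc₁ : c ≤ 1) :
    ∑ i, |p i - c| = 1 + (Fintype.card ι - 2) * c := by
  have habs (i : ι) : |p i - c| = (1 - 2 * c) * p i + c := by
    rcases hp i with h | h <;> rw [h]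
    · rw [zero_sub, abs_neg, abs_of_nonneg hc₀]
      ring
    · rw [abs_of_nonneg (by linarith)]
      ring
  simp only [habs, sum_add_distrib, ← mul_sum, hsum, sum_const, card_univ, nsmul_eq_mul]
  ring

end SumAbsSub

lemma traceNorm_eq_re_trace_cfc_sqrt {d : ℕ} (A : Matrix (Fin d) (Fin d) ℂ) :
    traceNorm A = (cfc Real.sqrt (Aᴴ * A)).trace.re := by
  rw [(posSemidef_conjTranspose_mul_self A).1.cfc_eq]
  rfl

lemma traceNorm_sub_smul_one {d : ℕ} {ρ : Matrix (Fin d) (Fin d) ℂ} (hρ : ρ.IsHermitian)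
    (c : ℝ) : traceNorm (ρ - c • 1) = ∑ i, |hρ.eigenvalues i - c| := by
  have hshift : ρ - c • 1 = cfc (fun x => x - c) ρ := by
    rw [cfc_sub .., cfc_id' .., cfc_const .., Algebra.algebraMap_eq_smul_one]
  have hsq : (ρ - c • 1)ᴴ * (ρ - c • 1) = cfc (fun x => (x - c) ^ 2) ρ := by
    rw [hshift, ← star_eq_conjTranspose, ← cfc_star, ← cfc_mul ..]
    simp only [star_trivial, sq]
  rw [traceNorm_eq_re_trace_cfc_sqrt, hsq, ← cfc_comp' .., hρ.trace_cfc]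
  simp only [Real.sqrt_sq_eq_abs, Complex.coe_algebraMap, Complex.re_sum,
    Complex.ofReal_re]

/-- For any `d×d` density matrix `ρ` (`d ≥ 2`), the trace-norm mixedness
`M_tr(ρ) = 1 − (d/(2(d−1))) ‖ρ − (1/d)I_d‖_tr` satisfies `0 ≤ M_tr(ρ) ≤ 1`,
and `M_tr(ρ) = 0` whenever `ρ` is a pure state (a rank-one projection). -/
theorem traceNorm_mixedness_bounds {d : ℕ} (hd : 2 ≤ d)
    (ρ : Matrix (Fin d) (Fin d) ℂ) (hρ : ρ.PosSemidef) (hρtr : ρ.trace = 1) :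
    0 ≤ 1 - ((d : ℝ) / (2 * ((d : ℝ) - 1))) * traceNorm (ρ - ((d : ℝ)⁻¹) • 1) ∧
    1 - ((d : ℝ) / (2 * ((d : ℝ) - 1))) * traceNorm (ρ - ((d : ℝ)⁻¹) • 1) ≤ 1 ∧
    (ρ * ρ = ρ → ρ.rank = 1 →
      1 - ((d : ℝ) / (2 * ((d : ℝ) - 1))) * traceNorm (ρ - ((d : ℝ)⁻¹) • 1) = 0) := by
  have hd' : (2 : ℝ) ≤ d := by exact_mod_cast hd
  have : Nonempty (Fin d) := ⟨⟨0, by omega⟩⟩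
  have hsum : ∑ i, hρ.1.eigenvalues i = 1 := by
    have h := hρ.1.trace_eq_sum_eigenvalues
    rw [hρtr, ← RCLike.ofReal_sum, ← RCLike.ofReal_one, RCLike.ofReal_inj] at h
    exact h.symm
  rw [traceNorm_sub_smul_one hρ.1]
  have hscale : (d : ℝ) / (2 * (d - 1)) * (1 + (d - 2) * (d : ℝ)⁻¹) = 1 := by
    field_simp [show (d : ℝ) - 1 ≠ 0 by linarith]
    ring
  have hT₀ : 0 ≤ ∑ i, |hρ.1.eigenvalues i - (d : ℝ)⁻¹| :=
    Finset.sum_nonneg fun i _ => abs_nonneg _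
  have hT_le : ∑ i, |hρ.1.eigenvalues i - (d : ℝ)⁻¹| ≤ 1 + (d - 2) * (d : ℝ)⁻¹ := by
    obtain ⟨j, hj⟩ := exists_inv_card_le_of_sum_eq_one hsum
    rw [Fintype.card_fin] at hj
    simpa using sum_abs_sub_const_le hρ.eigenvalues_nonneg hsum (by positivity) hj
  have hfactor : 0 ≤ (d : ℝ) / (2 * (d - 1)) := div_nonneg (by linarith) (by linarith)
  refine ⟨?_, ?_, fun hidem _ => ?_⟩
  · nlinarith [mul_le_mul_of_nonneg_left hT_le hfactor]
  · nlinarith [mul_nonneg hfactor hT₀]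
  · rw [sum_abs_sub_const_of_eq_zero_or_one (hρ.1.eigenvalues_eq_zero_or_one hidem) hsum
      (by positivity) (inv_le_one_of_one_le₀ (by linarith)), Fintype.card_fin, hscale, sub_self]
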